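/- arXiv:1909.12256 — 5 statements merged into one kernel-verified Lean document; each statement's English description precedes it below -/
import Mathlib

section
/- Let β, α ∈ (Z/p^k)^n be nondegenerate, let j be an index such that α_j is a unit, set a = α_j^{-1}·β_j and m̃ = β − a·α (so m̃_j = 0). Then the image of the map x ↦ ⟨m̃, x⟩ from (Z/p^k)^n to Z/p^k does not depend on the choice of the index j among those with α_j invertible. -/
lemma stmt_5_aux (N : ℕ) {n : ℕ} (α β : Fin n → ZMod N) (j : Fin n)
    (hj : IsUnit (α j)) (a' : ZMod N) :
    Set.range (fun x : Fin n → ZMod N =>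
        ∑ i, (β i - (α j)⁻¹ * β j * α i) * x i) ⊆
      Set.range (fun x : Fin n → ZMod N =>
        ∑ i, (β i - a' * α i) * x i) := by
  have hinv : (α j)⁻¹ * α j = 1 := ZMod.inv_mul_of_unit _ hj
  rintro _ ⟨x, rfl⟩
  set S := ∑ i, α i * x i with hS
  refine ⟨Function.update x j (x j - (α j)⁻¹ * S), ?_⟩
  have split : ∀ (m y : Fin n → ZMod N),
      ∑ i, m i * y i = m j * y j + ∑ i ∈ Finset.univ.erase j, m i * y i :=
    fun m y => (Finset.add_sum_erase _ _ (Finset.mem_univ j)).symm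
  have herase : ∑ i ∈ Finset.univ.erase j,
      (β i - a' * α i) * Function.update x j (x j - (α j)⁻¹ * S) i =
      ∑ i ∈ Finset.univ.erase j, (β i - a' * α i) * x i :=
    Finset.sum_congr rfl fun i hi => by
      rw [Function.update_of_ne (Finset.ne_of_mem_erase hi)]
  dsimp only
  rw [split _ (Function.update x j (x j - (α j)⁻¹ * S)), herase,
    Function.update_self]
  have h2 : ∀ b : ZMod N, ∑ i, (β i - b * α i) * x i
      = (∑ i, β i * x i) - b * S := by
    intro b
    rw [hS, Finset.mul_sum, ← Finset.sum_sub_distrib]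
    exact Finset.sum_congr rfl fun i _ => by ring
  have h3 : ∑ i ∈ Finset.univ.erase j, (β i - a' * α i) * x i
      = (∑ i, (β i - a' * α i) * x i) - (β j - a' * α j) * x j := by
    rw [split (fun i => β i - a' * α i) x]; ring
  rw [h3, h2, h2]
  linear_combination (a' * S) * hinv

theorem stmt_5 (p k n : ℕ) (hp : p.Prime) (hk : 1 ≤ k) (hn : 1 ≤ n)
    (α β : Fin n → ZMod (p ^ k))
    (j j' : Fin n) (hj : IsUnit (α j)) (hj' : IsUnit (α j')) :
    Set.range (fun x : Fin n → ZMod (p ^ k) =>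
        ∑ i, (β i - (α j)⁻¹ * β j * α i) * x i) =
      Set.range (fun x : Fin n → ZMod (p ^ k) =>
        ∑ i, (β i - (α j')⁻¹ * β j' * α i) * x i) := by
  exact Set.Subset.antisymm
    (stmt_5_aux _ α β j hj ((α j')⁻¹ * β j'))
    (stmt_5_aux _ α β j' hj' ((α j)⁻¹ * β j))
end

section
/- The relation of M-dependence is symmetric: for nondegenerate α, β ∈ (Z/p^k)^n and a subgroup M ≤ Z/p^k, if β is M-dependent on α then α is M-dependent on β. -/
/-- `β` is `M`-dependent on `α`: for any (equivalently, some) index `j` with `α j`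
a unit, `M` is the image of `x ↦ ⟨β - (α j)⁻¹ β j • α, x⟩`. -/
def MDep {p k n : ℕ} (M : AddSubgroup (ZMod (p ^ k))) (α β : Fin n → ZMod (p ^ k)) : Prop :=
  ∀ j : Fin n, IsUnit (α j) →
    Set.range (fun x : Fin n → ZMod (p ^ k) =>
      ∑ i, (β i - (α j)⁻¹ * β j * α i) * x i) = (M : Set (ZMod (p ^ k)))

lemma mdep_aux {R : Type*} [CommRing R] {n : ℕ} (α β : Fin n → R) (j j' : Fin n)
    (b c : R) (hb : β j * b = 1) :
    Set.range (fun x : Fin n → R => ∑ i, (α i - b * α j * β i) * x i) ⊆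
      Set.range (fun x : Fin n → R => ∑ i, (β i - c * β j' * α i) * x i) := by
  rintro _ ⟨x, rfl⟩
  refine ⟨fun i => -(b * α j) * x i + (if i = j then b * ∑ l, α l * x l else 0), ?_⟩
  have e : ∀ i : Fin n, (β i - c * β j' * α i) *
      (-(b * α j) * x i + (if i = j then b * ∑ l, α l * x l else 0)) =
      (β i - c * β j' * α i) * (-(b * α j) * x i) +
        (if i = j then (β j - c * β j' * α j) * (b * ∑ l, α l * x l) else 0) := by
    intro i
    by_cases hi : i = j <;> simp [hi, mul_add]
  simp only [e, Finset.sum_add_distrib, Finset.sum_ite_eq' Finset.univ j, Finset.mem_univ,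
    if_true]
  have e2 : (β j - c * β j' * α j) * (b * ∑ l, α l * x l) =
      ∑ l, (β j - c * β j' * α j) * (b * (α l * x l)) := by
    rw [Finset.mul_sum, Finset.mul_sum]
  rw [e2, ← Finset.sum_add_distrib]
  refine Finset.sum_congr rfl fun i _ => ?_
  linear_combination (α i * x i) * hb

theorem stmt_6 (p k n : ℕ) (hp : p.Prime) (hk : 1 ≤ k) (hn : 1 ≤ n)
    (M : AddSubgroup (ZMod (p ^ k))) (α β : Fin n → ZMod (p ^ k))
    (hα : ∃ j, IsUnit (α j)) (hβ : ∃ j, IsUnit (β j))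
    (h : MDep M α β) : MDep M β α := by
  intro j hj
  obtain ⟨j', hj'⟩ := hα
  rw [← h j' hj']
  exact subset_antisymm
    (mdep_aux α β j j' (β j)⁻¹ (α j')⁻¹ (ZMod.mul_inv_of_unit _ hj))
    (mdep_aux β α j' j (α j')⁻¹ (β j)⁻¹ (ZMod.mul_inv_of_unit _ hj'))
end

section
/- Let p be a prime, L a finite abelian group whose order is coprime to p, l ∈ L, and let ν: L → L be the inverse of the automorphism x ↦ p·x of L. For n ≥ 1 define w^l_n : (Z/p)^n → L by w^l_n(x) = l if x = 0 and w^l_n(x) = 0 otherwise. Then for all x_1, ..., x_{n+1} ∈ Z/p: w^l_{n+1}(x_1, ..., x_{n+1}) = ν( Σ_{i=0}^{p−1} w^l_n(x_1, ..., x_{n−1}, x_n + i·x_{n+1}) − Σ_{i=1}^{p−1} w^l_n(x_1, ..., x_{n−1}, i + x_{n+1}) ). -/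
theorem stmt_10 (p : ℕ) (hp : p.Prime) (L : Type*) [AddCommGroup L] [Fintype L]
    (hcop : Nat.Coprime p (Fintype.card L)) (l : L)
    (ν : L → L) (hν₁ : ∀ x, p • ν x = x) (hν₂ : ∀ x, ν (p • x) = x)
    (n : ℕ) (hn : 1 ≤ n)
    (z : Fin (n - 1) → ZMod p) (a b : ZMod p) :
    (if z = 0 ∧ a = 0 ∧ b = 0 then l else 0) =
      ν ((∑ i ∈ Finset.range p,
            if z = 0 ∧ a + (i : ZMod p) * b = 0 then l else 0) -
          ∑ i ∈ Finset.Ico 1 p,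
            if z = 0 ∧ (i : ZMod p) + b = 0 then l else 0) := by
  haveI : Fact p.Prime := ⟨hp⟩
  haveI : NeZero p := ⟨hp.pos.ne'⟩
  have hν0 : ν 0 = 0 := by simpa using hν₂ 0
  by_cases hz : z = 0
  · simp only [hz, true_and]
    by_cases hb : b = 0
    · simp only [hb, mul_zero, add_zero, and_false, if_false]
      have h2 : (∑ i ∈ Finset.Ico 1 p, if (i : ZMod p) = 0 then l else 0) = 0 := by
        apply Finset.sum_eq_zero
        intro i hi
        rw [Finset.mem_Ico] at hi
        have : (i : ZMod p) ≠ 0 := by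
          rw [Ne, ZMod.natCast_eq_zero_iff]
          exact fun h => absurd (Nat.le_of_dvd (by omega) h) (by omega)
        simp [this]
      rw [h2, sub_zero, Finset.sum_const, Finset.card_range, hν₂]
      simp
    · simp only [hb, and_false, if_false]
      have hbu : IsUnit b := isUnit_iff_ne_zero.mpr hb
      set c : ℕ := ((-a) * b⁻¹).val with hc
      have h1 : (∑ i ∈ Finset.range p, if a + (i : ZMod p) * b = 0 then l else 0) = l := by
        rw [Finset.sum_eq_single c]
        · have : ((c : ZMod p)) = (-a) * b⁻¹ := by
            rw [hc, ZMod.natCast_val, ZMod.cast_id]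
          rw [this]
          rw [if_pos (by field_simp; ring)]
        · intro i hi hne
          rw [Finset.mem_range] at hi
          have : a + (i : ZMod p) * b ≠ 0 := by
            intro h
            apply hne
            have : (i : ZMod p) = (-a) * b⁻¹ := by
              field_simp
              linear_combination h
            have := congrArg ZMod.val this
            rwa [ZMod.val_natCast_of_lt hi] at this
          simp [this]
        · intro h
          exact absurd (Finset.mem_range.mpr (ZMod.val_lt _)) h
      set c' : ℕ := (-b).val with hc'
      have h2 : (∑ i ∈ Finset.Ico 1 p, if (i : ZMod p) + b = 0 then l else 0) = l := by
        rw [Finset.sum_eq_single c']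
        · have : ((c' : ZMod p)) = -b := by
            rw [hc', ZMod.natCast_val, ZMod.cast_id]
          simp [this]
        · intro i hi hne
          rw [Finset.mem_Ico] at hi
          have : (i : ZMod p) + b ≠ 0 := by
            intro h
            apply hne
            have : (i : ZMod p) = -b := by linear_combination h
            have := congrArg ZMod.val this
            rwa [ZMod.val_natCast_of_lt hi.2] at this
          simp [this]
        · intro h
          exfalso
          apply h
          rw [Finset.mem_Ico]
          constructor
          · by_contra hlt
            have : c' = 0 := by omega
            exact hb (neg_eq_zero.mp ((ZMod.val_eq_zero _).mp this))
          · exact ZMod.val_lt _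
      rw [h1, h2, sub_self, hν0]
  · simp [hz, hν0]
end

section
/- Let p be a prime, k ≥ 1, and let L be a finite abelian group with gcd(p, |L|) = 1. Then every function f : (Z/p^k)^n → L can be written as a finite sum of functions of the form x ↦ g(⟨β, x⟩ + c), where β ∈ (Z/p^k)^n, c ∈ Z/p^k, and g : Z/p^k → L is a function supported at 0 (i.e., g(u) = 0 for u ≠ 0). That is, there exist finitely many triples (g_i, β_i, c_i) with each g_i : Z/p^k → L vanishing outside 0, such that f(x) = Σ_i g_i(⟨β_i, x⟩ + c_i) for all x ∈ (Z/p^k)^n. -/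
lemma auxA (p k : ℕ) (hp : p.Prime) (hk : 1 ≤ k) (v : ZMod (p^k)) (hv : v ≠ 0) :
    ∃ u : ZMod (p^k), u * v = (p : ZMod (p^k))^(k-1) := by
  haveI : NeZero (p^k) := ⟨pow_ne_zero k hp.pos.ne'⟩
  set m := v.val with hmdef
  have hm0 : m ≠ 0 := by
    intro h
    exact hv ((ZMod.val_eq_zero v).mp h)
  set s := m.factorization p with hsdef
  have hdvd : p ^ s ∣ m := Nat.ordProj_dvd m p
  obtain ⟨m', hm'⟩ := hdvd
  have hpm' : ¬ p ∣ m' := by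
    have h2 := Nat.not_dvd_ordCompl hp hm0
    have hmc : m / p ^ s = m' := by
      rw [hm']; exact Nat.mul_div_cancel_left m' (pow_pos hp.pos s)
    rwa [← hsdef, hmc] at h2
  have hmlt : m < p ^ k := ZMod.val_lt v
  have hsk : s < k := by
    by_contra hle
    push_neg at hle
    have h1 : p ^ k ≤ p ^ s := Nat.pow_le_pow_right hp.pos hle
    have : p ^ k ≤ m := le_trans h1 (Nat.le_of_dvd (Nat.pos_of_ne_zero hm0) ⟨m', hm'⟩)
    omega
  have hcop : Nat.Coprime m' (p ^ k) :=
    ((Nat.Prime.coprime_iff_not_dvd hp |>.mpr hpm').symm.pow_right k)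
  set w : (ZMod (p^k))ˣ := ZMod.unitOfCoprime m' hcop with hwdef
  have hw : ((w⁻¹ : (ZMod (p^k))ˣ) : ZMod (p^k)) * (m' : ZMod (p^k)) = 1 := by
    have : ((w⁻¹ : (ZMod (p^k))ˣ) : ZMod (p^k)) * ((w : (ZMod (p^k))ˣ) : ZMod (p^k)) = 1 := by
      rw [← Units.val_mul, inv_mul_cancel, Units.val_one]
    simpa [hwdef, ZMod.coe_unitOfCoprime] using this
  refine ⟨(p : ZMod (p^k))^(k-1-s) * (w⁻¹ : (ZMod (p^k))ˣ), ?_⟩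
  have hv2 : v = ((p^s * m' : ℕ) : ZMod (p^k)) := by
    rw [← hm', hmdef, ZMod.natCast_val, ZMod.cast_id]
  rw [hv2]
  push_cast
  calc (p : ZMod (p^k))^(k-1-s) * (w⁻¹ : (ZMod (p^k))ˣ) * ((p:ZMod (p^k))^s * (m':ZMod (p^k)))
      = (p : ZMod (p^k))^(k-1-s) * (p:ZMod (p^k))^s * (((w⁻¹ : (ZMod (p^k))ˣ) : ZMod (p^k)) * (m':ZMod (p^k))) := by ring
    _ = (p : ZMod (p^k))^(k-1) := by
        rw [hw, mul_one, ← pow_add, Nat.sub_add_cancel (by omega)]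

theorem stmt_13 (p k : ℕ) (hp : p.Prime) (hk : 1 ≤ k)
    (L : Type*) [AddCommGroup L] [Fintype L]
    (hcop : Nat.Coprime p (Fintype.card L))
    (n : ℕ) (f : (Fin n → ZMod (p ^ k)) → L) :
    ∃ (N : ℕ) (g : Fin N → ZMod (p ^ k) → L)
      (β : Fin N → Fin n → ZMod (p ^ k)) (c : Fin N → ZMod (p ^ k)),
      (∀ (i : Fin N) (u : ZMod (p ^ k)), u ≠ 0 → g i u = 0) ∧
      ∀ x : Fin n → ZMod (p ^ k),
        f x = ∑ i, g i ((∑ j, β i j * x j) + c i) := by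
  classical
  haveI : NeZero (p ^ k) := ⟨pow_ne_zero k hp.pos.ne'⟩
  set C := Fintype.card (Fin n → ZMod (p ^ k)) with hCdef
  have hcopC : Nat.Coprime C (Fintype.card L) := by
    have hC : C = (p ^ k) ^ (Fintype.card (Fin n)) := by
      rw [hCdef, Fintype.card_fun, ZMod.card]
    rw [hC]
    exact (hcop.pow_left k).pow_left _
  -- Bezout: an "inverse" of multiplication by C on L
  obtain ⟨z, hz⟩ : ∃ z : ℤ, ∀ ℓ : L, C • (z • ℓ) = ℓ := by
    refine ⟨Nat.gcdA C (Fintype.card L), fun ℓ => ?_⟩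
    have hb := Nat.gcd_eq_gcd_ab C (Fintype.card L)
    rw [hcopC] at hb
    have h1 : (C : ℤ) * Nat.gcdA C (Fintype.card L)
        = 1 - (Fintype.card L : ℤ) * Nat.gcdB C (Fintype.card L) := by
      rw [show ((1:ℕ):ℤ) = 1 from rfl] at hb; linarith
    have hcardz : (Fintype.card L : ℤ) • ℓ = 0 := by
      rw [natCast_zsmul]; exact card_nsmul_eq_zero
    calc C • (Nat.gcdA C (Fintype.card L) • ℓ)
        = ((C : ℤ) * Nat.gcdA C (Fintype.card L)) • ℓ := by
          rw [mul_zsmul, natCast_zsmul]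
      _ = (1 - (Fintype.card L : ℤ) * Nat.gcdB C (Fintype.card L)) • ℓ := by rw [h1]
      _ = ℓ := by
          rw [sub_zsmul, one_zsmul, mul_comm, mul_zsmul, hcardz, smul_zero]; simp
  set h₀ : ZMod (p ^ k) := (p : ZMod (p ^ k)) ^ (k - 1) with hh₀
  have hh₀ne : h₀ ≠ 0 := by
    have : ((p ^ (k-1) : ℕ) : ZMod (p ^ k)) ≠ 0 := by
      rw [Ne, ZMod.natCast_eq_zero_iff]
      intro hd
      have h1 := Nat.le_of_dvd (pow_pos hp.pos _) hd
      have h2 : p ^ (k-1) < p ^ k := Nat.pow_lt_pow_right hp.one_lt (by omega)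
      omega
    rw [hh₀]; simpa using this
  -- the data on the index type
  let gI : ((Fin n → ZMod (p ^ k)) × (Fin n → ZMod (p ^ k)) × Bool) → ZMod (p ^ k) → L := fun i u =>
    if u = 0 then (if i.2.2 then z • f i.1 else -(z • f i.1)) else 0
  let cI : ((Fin n → ZMod (p ^ k)) × (Fin n → ZMod (p ^ k)) × Bool) → ZMod (p ^ k) := fun i =>
    if i.2.2 then -∑ j, i.2.1 j * i.1 j else -∑ j, i.2.1 j * i.1 j - h₀
  let e : Fin (Fintype.card ((Fin n → ZMod (p ^ k)) × (Fin n → ZMod (p ^ k)) × Bool))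
      ≃ ((Fin n → ZMod (p ^ k)) × (Fin n → ZMod (p ^ k)) × Bool) :=
    (Fintype.equivFin _).symm
  refine ⟨_, fun i => gI (e i), fun i => (e i).2.1, fun i => cI (e i), ?_, ?_⟩
  · intro i u hu
    simp [gI, hu]
  · intro x
    rw [Fintype.sum_equiv e (fun i => gI (e i) ((∑ j, (e i).2.1 j * x j) + cI (e i)))
      (fun i => gI i ((∑ j, i.2.1 j * x j) + cI i)) (fun i => rfl)]
    rw [Fintype.sum_prod_type]
    have key : ∀ a : Fin n → ZMod (p ^ k),
        (∑ bs : (Fin n → ZMod (p ^ k)) × Bool,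
          gI (a, bs) ((∑ j, bs.1 j * x j) + cI (a, bs)))
        = if a = x then f x else 0 := by
      intro a
      rw [Fintype.sum_prod_type]
      have hterm : ∀ b : Fin n → ZMod (p ^ k), ∀ s : Bool,
          gI (a, b, s) ((∑ j, b j * x j) + cI (a, b, s))
          = if s then (if (∑ j, b j * (x j - a j)) = 0 then z • f a else 0)
            else (if (∑ j, b j * (x j - a j)) = h₀ then -(z • f a) else 0) := by
        intro b s
        have hD : (∑ j, b j * (x j - a j)) = ∑ j, b j * x j - ∑ j, b j * a j := by
          simp [mul_sub, Finset.sum_sub_distrib]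
        cases s
        · simp only [gI, cI, Bool.false_eq_true, if_false]
          refine if_congr ?_ rfl rfl
          rw [hD]
          constructor <;> intro h <;> linear_combination h
        · simp only [gI, cI, if_true]
          refine if_congr ?_ rfl rfl
          rw [hD]
          constructor <;> intro h <;> linear_combination h
      simp only [Fintype.sum_bool, hterm, if_true, Bool.false_eq_true, if_false]
      rw [Finset.sum_add_distrib]
      by_cases hax : a = x
      · subst hax
        simp only [sub_self, mul_zero, Finset.sum_const_zero, if_true]
        rw [if_neg (show (0:ZMod (p^k)) ≠ h₀ from Ne.symm hh₀ne)]
        simp only [Finset.sum_const_zero, add_zero, Finset.sum_const, Finset.card_univ]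
        rw [← hCdef, hz]
      · rw [if_neg hax]
        have hvne : ∃ j0, x j0 - a j0 ≠ 0 := by
          by_contra hc
          push_neg at hc
          apply hax
          funext j
          have := hc j
          rw [sub_eq_zero] at this
          exact this.symm
        obtain ⟨j0, hj0⟩ := hvne
        obtain ⟨u, hu⟩ := auxA p k hp hk (x j0 - a j0) hj0
        set β₀ : Fin n → ZMod (p ^ k) := fun i => if i = j0 then u else 0 with hβ₀
        have hβ₀v : (∑ j, β₀ j * (x j - a j)) = h₀ := by
          rw [hβ₀, Finset.sum_eq_single j0]
          · simpa using hu
          · intro b _ hb; simp [hb]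
          · intro h; exact absurd (Finset.mem_univ j0) h
        have hswap : (∑ b : Fin n → ZMod (p ^ k),
              (if (∑ j, b j * (x j - a j)) = h₀ then -(z • f a) else 0))
            = ∑ b : Fin n → ZMod (p ^ k),
              (if (∑ j, b j * (x j - a j)) = 0 then -(z • f a) else 0) := by
          rw [← Fintype.sum_equiv (Equiv.addRight β₀)
            (fun b => (if (∑ j, b j * (x j - a j)) = 0 then -(z • f a) else 0))
            (fun b => (if (∑ j, b j * (x j - a j)) = h₀ then -(z • f a) else 0)) ?_]
          intro b
          simp only [Equiv.coe_addRight, Pi.add_apply]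
          refine (if_congr ?_ rfl rfl).symm
          have hsum : (∑ j, (b j + β₀ j) * (x j - a j))
              = (∑ j, b j * (x j - a j)) + (∑ j, β₀ j * (x j - a j)) := by
            simp [add_mul, Finset.sum_add_distrib]
          rw [hsum, hβ₀v]
          exact add_eq_right
        rw [hswap]
        have hneg : ∀ b : Fin n → ZMod (p ^ k),
            (if (∑ j, b j * (x j - a j)) = 0 then -(z • f a) else 0)
            = -(if (∑ j, b j * (x j - a j)) = 0 then (z • f a) else 0) := by
          intro b
          split <;> simp
        simp only [hneg, Finset.sum_neg_distrib]
        exact add_neg_cancel _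
    simp only [key]
    rw [Finset.sum_ite_eq' Finset.univ x (fun _ => f x)]
    simp
end

section
/- Let U = Z/p_1^{k_1} × ... × Z/p_m^{k_m} where p_1, ..., p_m are distinct primes, and let L be a finite abelian group with gcd(|U|, |L|) = 1. For l ∈ L let w^l : U → L be given by w^l(u) = l if u = 0 and 0 otherwise. Then every function f : U^n → L can be written in the form f(x) = Σ μ^l_{β,c} · w^l(β ⊙ x + c), a finite sum over triples (l, β, c) with l ∈ L, β ∈ U^n, c ∈ U, where each μ^l_{β,c} is an integer and β ⊙ x denotes the componentwise collection of inner products (Σ_i β_i^{(1)} x_i^{(1)}, ..., Σ_i β_i^{(m)} x_i^{(m)}) ∈ U. -/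
open Finset

lemma aux_dvd_mod_iff {k m n : ℕ} (h : k ∣ n) : k ∣ m % n ↔ k ∣ m := by
  constructor
  · intro h1
    have h2 := Nat.mod_add_div m n
    have h3 : k ∣ m % n + n * (m / n) := dvd_add h1 (h.mul_right _)
    rwa [h2] at h3
  · intro h1
    have h2 : m % n = m - n * (m / n) := by
      have := Nat.mod_add_div m n; omega
    rw [h2]
    exact Nat.dvd_sub h1 (h.mul_right _)


lemma aux_sum_moebius (N : ℕ) :
    (∑ d ∈ N.divisors, ArithmeticFunction.moebius d) = if N = 1 then 1 else 0 := by
  have h : (ArithmeticFunction.moebius * ArithmeticFunction.zeta : ArithmeticFunction ℤ) N = (1 : ArithmeticFunction ℤ) N := by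
    rw [ArithmeticFunction.moebius_mul_coe_zeta]
  rwa [ArithmeticFunction.coe_mul_zeta_apply, ArithmeticFunction.one_apply] at h

noncomputable def rr (q : ℕ) (c : ZMod q) : ℤ :=
  ∑ e ∈ q.divisors, if c = (e : ZMod q) then ArithmeticFunction.moebius (q / e) else 0

lemma rr_zero (q : ℕ) [NeZero q] : rr q 0 = 1 := by
  have hq : q ≠ 0 := NeZero.ne q
  have hiff : ∀ e ∈ q.divisors, (((0 : ZMod q) = (e : ZMod q)) ↔ e = q) := by
    intro e he
    obtain ⟨hdvd, -⟩ := Nat.mem_divisors.mp he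
    constructor
    · intro h0
      have : (e : ZMod q) = 0 := h0.symm
      exact Nat.dvd_antisymm hdvd ((ZMod.natCast_eq_zero_iff e q).mp this)
    · rintro rfl
      simp
  calc rr q 0 = ∑ e ∈ q.divisors, if e = q then ArithmeticFunction.moebius (q / e) else 0 :=
        Finset.sum_congr rfl fun e he => if_congr (hiff e he) rfl rfl
    _ = 1 := by
        rw [Finset.sum_ite_eq' q.divisors q (fun e => ArithmeticFunction.moebius (q / e)),
          if_pos (Nat.mem_divisors_self q hq), Nat.div_self (Nat.pos_of_ne_zero hq),
          ArithmeticFunction.moebius_apply_one]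


open Classical in
lemma rr_sum_span (q : ℕ) [NeZero q] (y : ZMod q) (hy : y ≠ 0) :
    (∑ c ∈ Finset.univ.filter (fun c => c ∈ Ideal.span ({y} : Set (ZMod q))), rr q c) = 0 := by
  classical
  have hq : q ≠ 0 := NeZero.ne q
  set d := Nat.gcd q y.val with hd
  have hdq : d ∣ q := Nat.gcd_dvd_left _ _
  have hdy : d ∣ y.val := Nat.gcd_dvd_right _ _
  have hyval : y.val ≠ 0 := fun h => hy ((ZMod.val_eq_zero y).mp h)
  have hd0 : 0 < d := Nat.gcd_pos_of_pos_left _ (Nat.pos_of_ne_zero hq)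
  have hdlt : d < q := lt_of_le_of_lt (Nat.le_of_dvd (Nat.pos_of_ne_zero hyval) hdy) (ZMod.val_lt y)
  have hqd1 : q / d ≠ 1 := by
    intro h1
    have h2 : d * (q / d) = q := Nat.mul_div_cancel' hdq
    rw [h1, mul_one] at h2
    omega
  have hqd0 : q / d ≠ 0 := by
    intro h
    have h2 := Nat.mul_div_cancel' hdq
    rw [h, mul_zero] at h2
    exact hq h2.symm
  have hmem : ∀ c : ZMod q, (c ∈ Ideal.span ({y} : Set (ZMod q))) ↔ d ∣ c.val := by
    intro c
    constructor
    · intro hc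
      obtain ⟨a, rfl⟩ := Ideal.mem_span_singleton'.mp hc
      rw [ZMod.val_mul]
      exact (aux_dvd_mod_iff hdq).mpr (Dvd.dvd.mul_left hdy a.val)
    · intro hc
      have hbez : (d : ZMod q) = y * (Nat.gcdB q y.val : ZMod q) := by
        have h1 : (d : ℤ) = q * Nat.gcdA q y.val + y.val * Nat.gcdB q y.val :=
          Nat.gcd_eq_gcd_ab q y.val
        have h2 := congrArg (fun z : ℤ => (z : ZMod q)) h1
        push_cast at h2
        rw [ZMod.natCast_self] at h2
        simpa [ZMod.natCast_val, ZMod.cast_id] using h2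
      refine Ideal.mem_span_singleton'.mpr ⟨(↑(c.val / d) * (Nat.gcdB q y.val : ZMod q)), ?_⟩
      calc ((c.val / d : ℕ) : ZMod q) * (Nat.gcdB q y.val : ZMod q) * y
          = ((c.val / d : ℕ) : ZMod q) * (d : ZMod q) := by rw [hbez]; ring
        _ = ((c.val / d * d : ℕ) : ZMod q) := by push_cast; ring
        _ = c := by rw [Nat.div_mul_cancel hc]; simp [ZMod.natCast_val, ZMod.cast_id]
  have hfilter : (Finset.univ.filter (fun c : ZMod q => c ∈ Ideal.span ({y} : Set (ZMod q))))
      = Finset.univ.filter (fun c : ZMod q => d ∣ c.val) := by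
    apply Finset.filter_congr
    intro c _
    simp [hmem c]
  rw [hfilter]
  simp only [rr]
  rw [Finset.sum_comm]
  have hinner : ∀ e ∈ q.divisors,
      (∑ c ∈ Finset.univ.filter (fun c : ZMod q => d ∣ c.val),
        if c = (e : ZMod q) then ArithmeticFunction.moebius (q / e) else 0)
      = if d ∣ e then ArithmeticFunction.moebius (q / e) else 0 := by
    intro e he
    rw [Finset.sum_ite_eq' (Finset.univ.filter (fun c : ZMod q => d ∣ c.val)) ((e : ℕ) : ZMod q)
      (fun _ => ArithmeticFunction.moebius (q / e))]
    congr 1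
    simp only [Finset.mem_filter, Finset.mem_univ, true_and, ZMod.val_natCast]
    rw [aux_dvd_mod_iff hdq]
  rw [Finset.sum_congr rfl hinner]
  have hre : (∑ e ∈ q.divisors, if d ∣ e then ArithmeticFunction.moebius (q / e) else 0)
      = ∑ t ∈ (q / d).divisors, ArithmeticFunction.moebius (q / d / t) := by
    rw [← Finset.sum_filter]
    refine Finset.sum_nbij' (fun e => e / d) (fun t => d * t) ?_ ?_ ?_ ?_ ?_
    · intro e he
      simp only [Finset.mem_filter, Nat.mem_divisors] at he ⊢
      obtain ⟨⟨he1, -⟩, he2⟩ := he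
      refine ⟨?_, hqd0⟩
      obtain ⟨t, rfl⟩ := he2
      rw [Nat.mul_div_cancel_left t hd0]
      exact (Nat.dvd_div_iff_mul_dvd hdq).mpr he1
    · intro t ht
      simp only [Finset.mem_filter, Nat.mem_divisors] at ht ⊢
      obtain ⟨ht1, -⟩ := ht
      exact ⟨⟨(Nat.dvd_div_iff_mul_dvd hdq).mp ht1, hq⟩, Dvd.intro t rfl⟩
    · intro e he
      simp only [Finset.mem_filter] at he
      exact Nat.mul_div_cancel' he.2
    · intro t ht
      exact Nat.mul_div_cancel_left t hd0
    · intro e he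
      simp only [Finset.mem_filter] at he
      congr 1
      rw [Nat.div_div_eq_div_mul, Nat.mul_div_cancel' he.2]
  rw [hre, Nat.sum_div_divisors (q / d) ArithmeticFunction.moebius, aux_sum_moebius, if_neg hqd1]

open Classical in
lemma key_sum (q : ℕ) [NeZero q] (n : ℕ) (x : Fin n → ZMod q) :
    (∑ β : Fin n → ZMod q, rr q (∑ i, β i * x i))
      = if x = 0 then ((q : ℤ) ^ n) else 0 := by
  classical
  by_cases hx : x = 0
  · subst hx
    rw [if_pos rfl]
    simp only [Pi.zero_apply, mul_zero, Finset.sum_const_zero, rr_zero]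
    simp [Finset.card_univ, ZMod.card]
  · rw [if_neg hx]
    haveI : IsPrincipalIdealRing (ZMod q) :=
      IsPrincipalIdealRing.of_surjective (Int.castRingHom (ZMod q)) ZMod.intCast_surjective
    set φ : (Fin n → ZMod q) → ZMod q := fun β => ∑ i, β i * x i with hφ
    obtain ⟨y, hy⟩ := (IsPrincipalIdealRing.principal (Ideal.span (Set.range x))).principal
    have hy' : Ideal.span (Set.range x) = Ideal.span ({y} : Set (ZMod q)) := hy
    have hy_ne : y ≠ 0 := by
      rintro rfl
      apply hx
      funext i
      have hxi : x i ∈ Ideal.span (Set.range x) := Ideal.subset_span (Set.mem_range_self i)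
      rw [hy', Ideal.span_singleton_eq_bot.mpr rfl] at hxi
      simpa using hxi
    have hφadd : ∀ β γ : Fin n → ZMod q, φ (β + γ) = φ β + φ γ := by
      intro β γ; simp [hφ, add_mul, Finset.sum_add_distrib]
    have hφsub : ∀ β γ : Fin n → ZMod q, φ (β - γ) = φ β - φ γ := by
      intro β γ; simp [hφ, sub_mul, Finset.sum_sub_distrib]
    have himg : Finset.univ.image φ
        = Finset.univ.filter (fun c => c ∈ Ideal.span ({y} : Set (ZMod q))) := by
      ext c
      simp only [Finset.mem_image, Finset.mem_filter, Finset.mem_univ, true_and]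
      rw [← hy']
      constructor
      · rintro ⟨β, rfl⟩
        exact (Submodule.mem_span_range_iff_exists_fun (ZMod q)).mpr ⟨β, by simp [hφ, smul_eq_mul]⟩
      · intro hc
        obtain ⟨β, hβ⟩ := (Submodule.mem_span_range_iff_exists_fun (ZMod q)).mp hc
        exact ⟨β, by simpa [hφ, smul_eq_mul] using hβ⟩
    have hfiber : ∀ c ∈ Finset.univ.image φ,
        (Finset.univ.filter (fun β => φ β = c)).card
          = (Finset.univ.filter (fun β => φ β = 0)).card := by
      intro c hc
      obtain ⟨β₀, -, hβ₀⟩ := Finset.mem_image.mp hc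
      refine Finset.card_nbij' (fun β => β - β₀) (fun β => β + β₀) ?_ ?_ ?_ ?_
      · intro a ha
        simp only [Finset.mem_coe, Finset.mem_filter, Finset.mem_univ, true_and] at ha ⊢
        rw [hφsub, ha, hβ₀, sub_self]
      · intro b hb
        simp only [Finset.mem_coe, Finset.mem_filter, Finset.mem_univ, true_and] at hb ⊢
        rw [hφadd, hb, hβ₀, zero_add]
      · intro a _; simp
      · intro b _; simp
    calc (∑ β : Fin n → ZMod q, rr q (φ β))
        = ∑ c ∈ Finset.univ.image φ,
            (Finset.univ.filter (fun β => φ β = c)).card • rr q c :=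
          Finset.sum_comp (rr q) φ
      _ = ∑ c ∈ Finset.univ.image φ,
            (Finset.univ.filter (fun β => φ β = 0)).card • rr q c := by
          refine Finset.sum_congr rfl fun c hc => ?_
          rw [hfiber c hc]
      _ = (Finset.univ.filter (fun β => φ β = 0)).card
            • ∑ c ∈ Finset.univ.image φ, rr q c := by rw [Finset.smul_sum]
      _ = 0 := by rw [himg, rr_sum_span q y hy_ne, smul_zero]

open Classical in
theorem stmt_14 (m : ℕ) (p : Fin m → ℕ) (k : Fin m → ℕ)
    (hp : ∀ j, (p j).Prime) (hk : ∀ j, 1 ≤ k j)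
    (hdist : ∀ j j', j ≠ j' → p j ≠ p j')
    (L : Type*) [AddCommGroup L] [Fintype L]
    (hcop : Nat.Coprime (Nat.card ((j : Fin m) → ZMod (p j ^ k j)))
      (Fintype.card L))
    (n : ℕ) (f : (Fin n → ((j : Fin m) → ZMod (p j ^ k j))) → L) :
    ∃ (N : ℕ) (l : Fin N → L)
      (β : Fin N → Fin n → ((j : Fin m) → ZMod (p j ^ k j)))
      (c : Fin N → ((j : Fin m) → ZMod (p j ^ k j)))
      (μ : Fin N → ℤ),
      ∀ x : Fin n → ((j : Fin m) → ZMod (p j ^ k j)),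
        f x = ∑ i, μ i •
          (if (fun j => (∑ t, β i t j * x t j) + c i j) = (0 : (j : Fin m) → ZMod (p j ^ k j))
           then l i else 0) := by
  classical
  haveI hNZ : ∀ j, NeZero (p j ^ k j) := fun j => ⟨pow_ne_zero _ (hp j).pos.ne'⟩
  set q : ℕ := ∏ j, p j ^ k j with hqdef
  haveI hqNZ : NeZero q := ⟨Finset.prod_ne_zero_iff.mpr fun j _ => pow_ne_zero _ (hp j).pos.ne'⟩
  let ε : ZMod q ≃+* ((j : Fin m) → ZMod (p j ^ k j)) :=
    ZMod.prodEquivPi (fun j => p j ^ k j)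
      (fun j j' h => Nat.Coprime.pow _ _ ((Nat.coprime_primes (hp j) (hp j')).mpr (hdist j j' h)))
  have hcard : Nat.card ((j : Fin m) → ZMod (p j ^ k j)) = q := by
    rw [Nat.card_pi]
    simp [Nat.card_zmod, hqdef]
  have hq' : Nat.Coprime q (Fintype.card L) := by rwa [hcard] at hcop
  have hqn : Nat.Coprime (q ^ n) (Fintype.card L) := Nat.Coprime.pow_left n hq'
  set a : ℤ := Nat.gcdA (q ^ n) (Fintype.card L) with ha
  have hbez : ((q : ℤ)) ^ n * a + (Fintype.card L : ℤ) * Nat.gcdB (q ^ n) (Fintype.card L) = 1 := by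
    have h1 := Nat.gcd_eq_gcd_ab (q ^ n) (Fintype.card L)
    rw [Nat.Coprime] at hqn
    rw [hqn] at h1
    push_cast at h1
    linarith
  have hone : ∀ l : L, (a * (q : ℤ) ^ n) • l = l := by
    intro l
    have hcardsmul : ((Fintype.card L : ℤ)) • l = 0 := by
      rw [natCast_zsmul]
      exact card_nsmul_eq_zero
    have h2 : a * (q : ℤ) ^ n
        = 1 - (Fintype.card L : ℤ) * Nat.gcdB (q ^ n) (Fintype.card L) := by linarith
    rw [h2, sub_smul, one_smul, mul_comm, mul_smul, hcardsmul, smul_zero, sub_zero]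
  have hkeyU : ∀ x : Fin n → ((j : Fin m) → ZMod (p j ^ k j)),
      (∑ β : Fin n → ((j : Fin m) → ZMod (p j ^ k j)), rr q (ε.symm (∑ i, β i * x i)))
        = if x = 0 then ((q : ℤ) ^ n) else 0 := by
    intro x
    have hiff : ((fun i => ε.symm (x i)) = (0 : Fin n → ZMod q)) ↔ x = 0 := by
      constructor
      · intro h
        funext i
        have h2 : ε.symm (x i) = 0 := congrFun h i
        have h3 := congrArg ε h2
        rwa [RingEquiv.apply_symm_apply, map_zero] at h3
      · intro h
        funext i
        rw [congrFun h i]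
        simp
    calc (∑ β : Fin n → ((j : Fin m) → ZMod (p j ^ k j)), rr q (ε.symm (∑ i, β i * x i)))
        = ∑ γ : Fin n → ZMod q, rr q (∑ i, γ i * ε.symm (x i)) := by
          refine (Fintype.sum_equiv (Equiv.piCongrRight fun _ : Fin n => ε.toEquiv) _ _
            fun γ => ?_).symm
          congr 1
          rw [map_sum]
          refine Finset.sum_congr rfl fun i _ => ?_
          simp [Equiv.piCongrRight_apply]
      _ = if x = 0 then ((q : ℤ) ^ n) else 0 := by
          rw [key_sum q n (fun i => ε.symm (x i)), if_congr hiff rfl rfl]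
  let T := (Fin n → ((j : Fin m) → ZMod (p j ^ k j)))
    × (Fin n → ((j : Fin m) → ZMod (p j ^ k j))) × ((j : Fin m) → ZMod (p j ^ k j))
  let e0 : Fin (Fintype.card T) ≃ T := (Fintype.equivFin T).symm
  refine ⟨Fintype.card T, fun i => f (e0 i).1, fun i => (e0 i).2.1,
    fun i => -((e0 i).2.2 + ∑ t, (e0 i).2.1 t * (e0 i).1 t),
    fun i => a * rr q (ε.symm (e0 i).2.2), ?_⟩
  intro x
  set F : T → L := fun z => (a * rr q (ε.symm z.2.2)) •
    (if (fun j => (∑ t, z.2.1 t j * x t j) + (-(z.2.2 + ∑ t, z.2.1 t * z.1 t)) j)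
        = (0 : (j : Fin m) → ZMod (p j ^ k j)) then f z.1 else 0) with hF
  have hcond : ∀ (z : T),
      ((fun j => (∑ t, z.2.1 t j * x t j) + (-(z.2.2 + ∑ t, z.2.1 t * z.1 t)) j)
        = (0 : (j : Fin m) → ZMod (p j ^ k j)))
      ↔ ((∑ t, z.2.1 t * (x t - z.1 t)) = z.2.2) := by
    rintro ⟨x₀, b, w⟩
    have h1 : (fun j => (∑ t, b t j * x t j) + (-(w + ∑ t, b t * x₀ t)) j)
        = ((∑ t, b t * x t) + -(w + ∑ t, b t * x₀ t)) := by
      funext j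
      simp [Finset.sum_apply]
    rw [h1]
    have h2 : (∑ t, b t * (x t - x₀ t)) = (∑ t, b t * x t) - (∑ t, b t * x₀ t) := by
      simp [mul_sub, Finset.sum_sub_distrib]
    rw [h2, add_neg_eq_zero, sub_eq_iff_eq_add]
  have hx₀sum : ∀ x₀ : Fin n → ((j : Fin m) → ZMod (p j ^ k j)),
      (∑ b : Fin n → ((j : Fin m) → ZMod (p j ^ k j)),
        ∑ w : ((j : Fin m) → ZMod (p j ^ k j)),
        (a * rr q (ε.symm w)) •
          (if (fun j => (∑ t, b t j * x t j) + (-(w + ∑ t, b t * x₀ t)) j)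
            = (0 : (j : Fin m) → ZMod (p j ^ k j)) then f x₀ else 0))
      = if x₀ = x then (a * (q : ℤ) ^ n) • f x₀ else 0 := by
    intro x₀
    have hstep : ∀ b : Fin n → ((j : Fin m) → ZMod (p j ^ k j)),
        (∑ w : ((j : Fin m) → ZMod (p j ^ k j)), (a * rr q (ε.symm w)) •
          (if (fun j => (∑ t, b t j * x t j) + (-(w + ∑ t, b t * x₀ t)) j)
            = (0 : (j : Fin m) → ZMod (p j ^ k j)) then f x₀ else 0))
        = (a * rr q (ε.symm (∑ t, b t * (x t - x₀ t)))) • f x₀ := by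
      intro b
      calc (∑ w : ((j : Fin m) → ZMod (p j ^ k j)), (a * rr q (ε.symm w)) •
            (if (fun j => (∑ t, b t j * x t j) + (-(w + ∑ t, b t * x₀ t)) j)
              = (0 : (j : Fin m) → ZMod (p j ^ k j)) then f x₀ else 0))
          = ∑ w : ((j : Fin m) → ZMod (p j ^ k j)),
              (if (∑ t, b t * (x t - x₀ t)) = w
                then (a * rr q (ε.symm w)) • f x₀ else 0) := by
            refine Finset.sum_congr rfl fun w _ => ?_
            rw [smul_ite, smul_zero, if_congr (hcond (x₀, b, w)) rfl rfl]
        _ = (a * rr q (ε.symm (∑ t, b t * (x t - x₀ t)))) • f x₀ := by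
            rw [Fintype.sum_ite_eq (∑ t, b t * (x t - x₀ t))
              (fun w => (a * rr q (ε.symm w)) • f x₀)]
    rw [Finset.sum_congr rfl fun b _ => hstep b]
    rw [← Finset.sum_smul, ← Finset.mul_sum, hkeyU (fun t => x t - x₀ t)]
    have hxx : ((fun t => x t - x₀ t) = 0) ↔ x₀ = x := by
      constructor
      · intro h
        funext t
        have h2 := congrFun h t
        simp only [Pi.zero_apply, sub_eq_zero] at h2
        exact h2.symm
      · intro h
        subst h
        funext t
        simp
    rw [if_congr hxx rfl rfl]
    by_cases hc : x₀ = x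
    · rw [if_pos hc, if_pos hc]
    · rw [if_neg hc, if_neg hc, mul_zero, zero_smul]
  have hmain : f x = ∑ z : T, F z := by
    rw [hF]
    calc f x = (a * (q : ℤ) ^ n) • f x := (hone (f x)).symm
      _ = ∑ x₀ : Fin n → ((j : Fin m) → ZMod (p j ^ k j)),
            (if x₀ = x then (a * (q : ℤ) ^ n) • f x₀ else 0) := by
          rw [Fintype.sum_ite_eq' x (fun x₀ => (a * (q : ℤ) ^ n) • f x₀)]
      _ = ∑ x₀ : Fin n → ((j : Fin m) → ZMod (p j ^ k j)),
            ∑ b : Fin n → ((j : Fin m) → ZMod (p j ^ k j)),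
            ∑ w : ((j : Fin m) → ZMod (p j ^ k j)),
            (a * rr q (ε.symm w)) •
              (if (fun j => (∑ t, b t j * x t j) + (-(w + ∑ t, b t * x₀ t)) j)
                = (0 : (j : Fin m) → ZMod (p j ^ k j)) then f x₀ else 0) :=
          (Finset.sum_congr rfl fun x₀ _ => (hx₀sum x₀).symm)
      _ = ∑ z : T, (a * rr q (ε.symm z.2.2)) •
            (if (fun j => (∑ t, z.2.1 t j * x t j) + (-(z.2.2 + ∑ t, z.2.1 t * z.1 t)) j)
              = (0 : (j : Fin m) → ZMod (p j ^ k j)) then f z.1 else 0) := by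
          rw [Fintype.sum_prod_type]
          exact Finset.sum_congr rfl fun x₀ _ => by rw [Fintype.sum_prod_type]
  calc f x = ∑ z : T, F z := hmain
    _ = ∑ i : Fin (Fintype.card T), F (e0 i) :=
        (Fintype.sum_equiv e0 (fun i => F (e0 i)) F fun i => rfl).symm
end
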